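/- The number e_p(c,b) of palindromic or anti-palindromic sequences in E(c,b) equals: 2^{(b−1)/2}·C((c−b−1)/2, (b−3)/2) if 2 ≤ b ≤ ⌈(c+1)/2⌉, c is even and b is odd; 2^{b/2}·C((c−b−1)/2, (b−2)/2) if 2 ≤ b ≤ ⌈(c+1)/2⌉, c is odd and b is even; and 0 otherwise. -/

import Mathlib

open Classical

/-- The number of sign changes in a finite sequence of integers. -/
def signChanges (l : List ℤ) : ℕ :=
  ((l.zip l.tail).filter (fun p => p.1 * p.2 < 0)).length

/-- The sum of the absolute values of the entries. -/
def absSum (l : List ℤ) : ℕ := (l.map Int.natAbs).sum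

/-- An even continued fraction representation: a nonempty even-length
sequence of nonzero integers. -/
def IsECF (l : List ℤ) : Prop :=
  l ≠ [] ∧ Even l.length ∧ ∀ x ∈ l, x ≠ 0

/-- Palindromic or anti-palindromic sequences. -/
def IsPalOrAnti (l : List ℤ) : Prop :=
  l.reverse = l ∨ l.reverse = l.map (fun x => -x)

/-- The set `E(c)` of even continued fractions with crossing number `c`. -/
def Ecross (c : ℕ) : Set (List ℤ) :=
  {l | IsECF l ∧ (2 * absSum l : ℤ) - signChanges l = c}

/-- The set `E(c,b)` of even continued fractions with crossing number `c`
and braid index `b`. -/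
def Eset (c b : ℕ) : Set (List ℤ) :=
  {l | IsECF l ∧ (2 * absSum l : ℤ) - signChanges l = c ∧
    (absSum l : ℤ) - signChanges l + 1 = b}

noncomputable def e (c b : ℕ) : ℕ := (Eset c b).ncard

noncomputable def eTot (c : ℕ) : ℕ := (Ecross c).ncard

noncomputable def ep (c b : ℕ) : ℕ := (Eset c b ∩ {l | IsPalOrAnti l}).ncard

noncomputable def epTot (c : ℕ) : ℕ := (Ecross c ∩ {l | IsPalOrAnti l}).ncard

/-!
An even-length palindrome or anti-palindrome is `h ++ h.reverse` or `h ++ (-h).reverse`. Gluing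
doubles `absSum h` and the sign changes of `h`, and the anti-palindrome gains one more sign change
in the middle; so the parity of `c` tells which kind occurs, and `(c, b)` determine `S = absSum h`
and the number `L` of sign changes of `h`. A nonempty sequence of nonzero integers with these
statistics is a sign for its first entry together with a word of length `S - 1` in the letters
`grow`, `next`, `flip` containing exactly `L` letters `flip`: there are `2 · C(S-1, L) · 2^(S-1-L)`.
-/

lemma signChanges_cons_cons (x y : ℤ) (t : List ℤ) :
    signChanges (x :: y :: t) = (if x * y < 0 then 1 else 0) + signChanges (y :: t) := by
  unfold signChanges
  split_ifs with h <;> simp [h, add_comm]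

lemma signChanges_singleton (x : ℤ) : signChanges [x] = 0 := rfl

lemma signChanges_append_cons (a : List ℤ) (y : ℤ) (t : List ℤ) :
    signChanges (a ++ y :: t) = signChanges (a ++ [y]) + signChanges (y :: t) := by
  induction a with
  | nil => simp [signChanges_singleton]
  | cons x a ih =>
    cases a with
    | nil => simp [signChanges_cons_cons, signChanges_singleton]
    | cons x' a => simp only [List.cons_append, signChanges_cons_cons] at ih ⊢; omega

lemma signChanges_reverse (l : List ℤ) : signChanges l.reverse = signChanges l := by
  induction l with
  | nil => rfl
  | cons x l ih =>
    cases l with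
    | nil => rfl
    | cons y t =>
      rw [List.reverse_cons, List.reverse_cons, List.append_assoc, List.singleton_append,
        signChanges_append_cons, ← List.reverse_cons, ih, signChanges_cons_cons,
        signChanges_cons_cons, signChanges_singleton, mul_comm]
      omega

lemma signChanges_map_neg (l : List ℤ) : signChanges (l.map (- ·)) = signChanges l := by
  induction l with
  | nil => rfl
  | cons x l ih =>
    cases l with
    | nil => rfl
    | cons y t =>
      simp only [List.map_cons] at ih ⊢
      rw [signChanges_cons_cons, signChanges_cons_cons, ih, neg_mul_neg]

lemma signChanges_lt_length {l : List ℤ} (hl : l ≠ []) : signChanges l < l.length := by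
  have := List.length_filter_le (fun p : ℤ × ℤ => decide (p.1 * p.2 < 0)) (l.zip l.tail)
  have := List.length_pos_iff.2 hl
  simp only [signChanges, List.length_zip, List.length_tail] at *
  omega

lemma absSum_cons (x : ℤ) (l : List ℤ) : absSum (x :: l) = x.natAbs + absSum l := by
  simp [absSum]

lemma absSum_append (a b : List ℤ) : absSum (a ++ b) = absSum a + absSum b := by
  simp [absSum]

lemma absSum_reverse (l : List ℤ) : absSum l.reverse = absSum l := by
  simp [absSum, List.sum_reverse]

lemma absSum_map_neg (l : List ℤ) : absSum (l.map (- ·)) = absSum l := by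
  simp [absSum, Function.comp_def]

lemma length_le_absSum {l : List ℤ} (hl : ∀ x ∈ l, x ≠ 0) : l.length ≤ absSum l := by
  induction l with
  | nil => simp [absSum]
  | cons x t ih =>
    have hx : x ≠ 0 := hl x List.mem_cons_self
    have := ih fun z hz => hl z (List.mem_cons_of_mem _ hz)
    rw [absSum_cons, List.length_cons]
    omega

lemma signChanges_lt_absSum {l : List ℤ} (hne : l ≠ []) (hl : ∀ x ∈ l, x ≠ 0) :
    signChanges l < absSum l :=
  (signChanges_lt_length hne).trans_le (length_le_absSum hl)

lemma mul_neg_iff_of_mul_unit_pos {x x' y : ℤ} {ε : ℤˣ} (hx : 0 < x * ε) (hx' : 0 < x' * ε) :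
    x * y < 0 ↔ x' * y < 0 := by
  rcases Int.units_eq_one_or ε with rfl | rfl <;>
    simp only [Units.val_one, Units.val_neg, mul_one, mul_neg, neg_pos] at hx hx' <;>
    simp only [mul_neg_iff] <;> omega

lemma signChanges_cons_congr {x x' : ℤ} {ε : ℤˣ} (hx : 0 < x * ε) (hx' : 0 < x' * ε)
    (t : List ℤ) : signChanges (x :: t) = signChanges (x' :: t) := by
  cases t with
  | nil => rfl
  | cons y t => simp only [signChanges_cons_cons, mul_neg_iff_of_mul_unit_pos hx hx']

lemma add_unit_of_mul_unit_pos {x : ℤ} {ε : ℤˣ} (hx : 0 < x * ε) :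
    0 < (x + ε) * ε ∧ (x + ε).natAbs = x.natAbs + 1 := by
  rcases Int.units_eq_one_or ε with rfl | rfl <;>
    simp only [Units.val_one, Units.val_neg, mul_one, mul_neg, neg_pos] at hx ⊢ <;> omega

lemma units_mul_self_pos (ε : ℤˣ) : 0 < (ε : ℤ) * ε := by
  simp [← Units.val_mul, Int.units_mul_self]

def signedCompositions (S L : ℕ) : Set (List ℤ) :=
  {h | h ≠ [] ∧ (∀ x ∈ h, x ≠ 0) ∧ absSum h = S ∧ signChanges h = L}

inductive Step
  | grow | next | flip
  deriving DecidableEq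

/-- `decode ε w` builds a sequence unit by unit, starting with the entry `ε`: `grow` adds a unit
to the current entry, `next` and `flip` start a new entry of the same, resp. opposite, sign. -/
def decode : ℤˣ → List Step → List ℤ
  | ε, [] => [ε]
  | ε, .grow :: w => (decode ε w).modifyHead (· + ε)
  | ε, .next :: w => ε :: decode ε w
  | ε, .flip :: w => ε :: decode (-ε) w

def encode : List ℤ → List Step
  | [] => []
  | [x] => List.replicate (x.natAbs - 1) .grow
  | x :: y :: t =>
      List.replicate (x.natAbs - 1) .grow ++ (if x * y < 0 then .flip else .next) :: encode (y :: t)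

lemma decode_eq_cons (ε : ℤˣ) (w : List Step) : ∃ x t, decode ε w = x :: t ∧ 0 < x * ε := by
  induction w generalizing ε with
  | nil => exact ⟨ε, [], rfl, units_mul_self_pos ε⟩
  | cons s w ih =>
    cases s with
    | grow =>
      obtain ⟨x, t, hw, hx⟩ := ih ε
      exact ⟨x + ε, t, by simp [decode, hw], (add_unit_of_mul_unit_pos hx).1⟩
    | next => exact ⟨ε, _, rfl, units_mul_self_pos ε⟩
    | flip => exact ⟨ε, _, rfl, units_mul_self_pos ε⟩

lemma decode_mem_signedCompositions (ε : ℤˣ) (w : List Step) :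
    decode ε w ∈ signedCompositions (w.length + 1) (w.count .flip) := by
  induction w generalizing ε with
  | nil => simp [decode, signedCompositions, absSum, signChanges_singleton]
  | cons s w ih =>
    have hε : (ε : ℤ) ≠ 0 := Units.ne_zero ε
    cases s with
    | grow =>
      obtain ⟨hne, hnz, habs, hsc⟩ := ih ε
      obtain ⟨x, t, hw, hx⟩ := decode_eq_cons ε w
      obtain ⟨hx', habs'⟩ := add_unit_of_mul_unit_pos hx
      rw [hw] at hnz habs hsc
      refine ⟨by simp [decode, hw], ?_, ?_, ?_⟩
      · simp only [decode, hw, List.modifyHead_cons, List.mem_cons]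
        rintro z (rfl | hz)
        · rintro h0
          simp [h0] at hx'
        · exact hnz z (List.mem_cons_of_mem _ hz)
      · simp only [decode, hw, List.modifyHead_cons, absSum_cons, habs'] at habs ⊢
        simp [← habs]; omega
      · simp [decode, hw, signChanges_cons_congr hx' hx, hsc]
    | next =>
      obtain ⟨hne, hnz, habs, hsc⟩ := ih ε
      obtain ⟨x, t, hw, hx⟩ := decode_eq_cons ε w
      have hsame : ¬ (ε : ℤ) * x < 0 := by rw [mul_comm]; exact not_lt.2 hx.le
      refine ⟨by simp [decode], by simpa [decode, hε] using hnz, ?_, ?_⟩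
      · simp [decode, absSum_cons, habs, add_comm]
      · rw [decode, hw, signChanges_cons_cons, ← hw, hsc, if_neg hsame]; simp
    | flip =>
      obtain ⟨hne, hnz, habs, hsc⟩ := ih (-ε)
      obtain ⟨y, t, hw, hy⟩ := decode_eq_cons (-ε) w
      have hflip : (ε : ℤ) * y < 0 := by simp only [Units.val_neg, mul_neg] at hy; linarith
      refine ⟨by simp [decode], by simpa [decode, hε] using hnz, ?_, ?_⟩
      · simp [decode, absSum_cons, habs, add_comm]
      · rw [decode, hw, signChanges_cons_cons, ← hw, hsc, if_pos hflip]; simp [add_comm]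

lemma encode_add_unit_cons {x : ℤ} {ε : ℤˣ} (hx : 0 < x * ε) (t : List ℤ) :
    encode ((x + ε) :: t) = .grow :: encode (x :: t) := by
  obtain ⟨hx', habs⟩ := add_unit_of_mul_unit_pos hx
  have hx0 : x.natAbs ≠ 0 := by rintro h; simp_all
  have hrep : List.replicate ((x + ε).natAbs - 1) Step.grow =
      .grow :: List.replicate (x.natAbs - 1) .grow := by
    rw [habs, ← List.replicate_succ]; congr 1; omega
  cases t with
  | nil => simp only [encode, hrep]
  | cons y t => simp only [encode, hrep, mul_neg_iff_of_mul_unit_pos hx' hx, List.cons_append]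

lemma encode_decode (ε : ℤˣ) (w : List Step) : encode (decode ε w) = w := by
  induction w generalizing ε with
  | nil => simp [decode, encode]
  | cons s w ih =>
    cases s with
    | grow =>
      obtain ⟨x, t, hw, hx⟩ := decode_eq_cons ε w
      rw [decode, hw, List.modifyHead_cons, encode_add_unit_cons hx, ← hw, ih]
    | next =>
      obtain ⟨x, t, hw, hx⟩ := decode_eq_cons ε w
      have hsame : ¬ (ε : ℤ) * x < 0 := by rw [mul_comm]; exact not_lt.2 hx.le
      rw [decode, hw, encode, if_neg hsame, ← hw, ih]; simp
    | flip =>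
      obtain ⟨y, t, hw, hy⟩ := decode_eq_cons (-ε) w
      have hflip : (ε : ℤ) * y < 0 := by simp only [Units.val_neg, mul_neg] at hy; linarith
      rw [decode, hw, encode, if_pos hflip, ← hw, ih]; simp

lemma decode_replicate_grow_append (ε : ℤˣ) (k : ℕ) (w : List Step) :
    decode ε (List.replicate k .grow ++ w) = (decode ε w).modifyHead (· + k * (ε : ℤ)) := by
  induction k with
  | zero =>
    obtain ⟨x, t, hw, -⟩ := decode_eq_cons ε w
    simp [hw]
  | succ k ih =>
    rw [List.replicate_succ, List.cons_append, decode, ih, List.modifyHead_modifyHead]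
    congr 1; ext x; simp only [Function.comp_apply]; push_cast; ring

lemma unit_add_natAbs_sub_one_mul {x : ℤ} {ε : ℤˣ} (hx : 0 < x * ε) :
    ε + ((x.natAbs - 1 : ℕ) : ℤ) * ε = x := by
  rcases Int.units_eq_one_or ε with rfl | rfl <;>
    simp only [Units.val_one, Units.val_neg, mul_one, mul_neg, neg_pos] at hx ⊢ <;> omega

lemma decode_encode {x : ℤ} {t : List ℤ} {ε : ℤˣ} (hx : 0 < x * ε) (ht : ∀ y ∈ t, y ≠ 0) :
    decode ε (encode (x :: t)) = x :: t := by
  induction t generalizing x ε with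
  | nil =>
    rw [encode, ← List.append_nil (List.replicate _ _), decode_replicate_grow_append]
    simp [decode, unit_add_natAbs_sub_one_mul hx]
  | cons y t ih =>
    have hy : y ≠ 0 := ht y List.mem_cons_self
    have hdecode : decode ε ((if x * y < 0 then .flip else .next) :: encode (y :: t)) =
        (ε : ℤ) :: y :: t := by
      split_ifs with hxy <;> rw [decode, ih ?_ fun z hz => ht z (List.mem_cons_of_mem _ hz)] <;>
        rcases Int.units_eq_one_or ε with rfl | rfl <;> simp [mul_neg_iff] at hx hxy ⊢ <;> omega
    rw [encode, decode_replicate_grow_append, hdecode]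
    simp [unit_add_natAbs_sub_one_mul hx]

lemma decode_injective : Function.Injective fun p : ℤˣ × List Step => decode p.1 p.2 := by
  rintro ⟨ε, w⟩ ⟨ε', w'⟩ (hdec : decode ε w = decode ε' w')
  obtain ⟨x, t, hw, hx⟩ := decode_eq_cons ε w
  obtain ⟨x', t', hw', hx'⟩ := decode_eq_cons ε' w'
  have hxx : x = x' := List.head_eq_of_cons_eq (hw.symm.trans (hdec.trans hw'))
  subst hxx
  have hε : ε = ε' := by
    rcases Int.units_eq_one_or ε with rfl | rfl <;> rcases Int.units_eq_one_or ε' with rfl | rfl <;>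
      simp at hx hx' ⊢ <;> omega
  subst hε
  rw [← encode_decode ε w, ← encode_decode ε w', hdec]

def words : ℕ → ℕ → Finset (List Step)
  | 0, 0 => {[]}
  | 0, _ + 1 => ∅
  | n + 1, 0 => (words n 0).image (.grow :: ·) ∪ (words n 0).image (.next :: ·)
  | n + 1, L + 1 =>
      (words n (L + 1)).image (.grow :: ·) ∪ (words n (L + 1)).image (.next :: ·) ∪
        (words n L).image (.flip :: ·)

lemma mem_words {n L : ℕ} {w : List Step} : w ∈ words n L ↔ w.length = n ∧ w.count .flip = L := by
  induction n generalizing L w with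
  | zero => cases L <;> cases w <;> simp [words]
  | succ n ih =>
    cases w with
    | nil => cases L <;> simp [words]
    | cons s w => cases L <;> cases s <;> simp [words, ih]

lemma card_words (n L : ℕ) : (words n L).card = n.choose L * 2 ^ (n - L) := by
  induction n generalizing L with
  | zero => cases L <;> simp [words]
  | succ n ih =>
    have hcons (s : Step) (L : ℕ) : ((words n L).image (s :: ·)).card = (words n L).card :=
      Finset.card_image_of_injective _ List.cons_injective
    have hdisj {s s' : Step} (hs : s ≠ s') (W W' : Finset (List Step)) :
        Disjoint (W.image (s :: ·)) (W'.image (s' :: ·)) := by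
      simp [Finset.disjoint_left, hs.symm]
    cases L with
    | zero =>
      rw [words, Finset.card_union_of_disjoint (hdisj (by decide) _ _), hcons, hcons, ih]
      simp [pow_succ]; ring
    | succ L =>
      rw [words, Finset.card_union_of_disjoint (Finset.disjoint_union_left.2
          ⟨hdisj (by decide) _ _, hdisj (by decide) _ _⟩),
        Finset.card_union_of_disjoint (hdisj (by decide) _ _), hcons, hcons, hcons, ih, ih,
        Nat.choose_succ_succ, Nat.add_sub_add_right]
      rcases Nat.lt_or_ge n (L + 1) with h | h
      · simp [Nat.choose_eq_zero_of_lt h]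
      · rw [show n - L = n - (L + 1) + 1 by omega, pow_succ]
        ring

lemma ncard_signedCompositions (n L : ℕ) :
    (signedCompositions (n + 1) L).ncard = 2 * (n.choose L * 2 ^ (n - L)) := by
  have himage : signedCompositions (n + 1) L =
      (fun p : ℤˣ × List Step => decode p.1 p.2) ''
        ↑(Finset.univ ×ˢ words n L : Finset (ℤˣ × List Step)) := by
    ext h
    constructor
    · rintro ⟨hne, hnz, habs, hsc⟩
      obtain ⟨x, t, rfl⟩ := List.exists_cons_of_ne_nil hne
      have hx : x ≠ 0 := hnz x List.mem_cons_self
      obtain ⟨ε, hε⟩ : ∃ ε : ℤˣ, 0 < x * ε := by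
        rcases hx.lt_or_gt with h | h
        exacts [⟨-1, by simpa using h⟩, ⟨1, by simpa using h⟩]
      have hdec := decode_encode hε fun y hy => hnz y (List.mem_cons_of_mem _ hy)
      obtain ⟨-, -, habs', hsc'⟩ := decode_mem_signedCompositions ε (encode (x :: t))
      rw [hdec] at habs' hsc'
      refine ⟨(ε, encode (x :: t)), ?_, hdec⟩
      simp only [Finset.coe_product, Finset.coe_univ, Set.mem_prod, Set.mem_univ, true_and,
        Finset.mem_coe, mem_words]
      omega
    · rintro ⟨⟨ε, w⟩, hw, rfl⟩
      simp only [Finset.coe_product, Finset.coe_univ, Set.mem_prod, Set.mem_univ, true_and,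
        Finset.mem_coe, mem_words] at hw
      simpa [hw] using decode_mem_signedCompositions ε w
  rw [himage, Set.ncard_image_of_injective _ decode_injective, Set.ncard_coe_finset,
    Finset.card_product, Finset.card_univ, Fintype.card_units_int, card_words]

def mirror (anti : Bool) (h : List ℤ) : List ℤ :=
  h ++ (h.map fun x => if anti then -x else x).reverse

lemma length_mirror (anti : Bool) (h : List ℤ) : (mirror anti h).length = 2 * h.length := by
  simp [mirror, two_mul]

lemma mirror_injective (anti : Bool) : Function.Injective (mirror anti) := fun a b hab =>
  (List.append_inj hab (by simpa [length_mirror] using congrArg List.length hab)).1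

lemma absSum_mirror (anti : Bool) (h : List ℤ) : absSum (mirror anti h) = 2 * absSum h := by
  cases anti <;> simp [mirror, absSum_append, absSum_reverse, absSum_map_neg, two_mul]

lemma signChanges_mirror (anti : Bool) {h : List ℤ} (hne : h ≠ []) (hh : ∀ x ∈ h, x ≠ 0) :
    signChanges (mirror anti h) = 2 * signChanges h + anti.toNat := by
  set f : ℤ → ℤ := fun x => if anti then -x else x
  obtain ⟨g, y, rfl⟩ := (List.eq_nil_or_concat' h).resolve_left hne
  have hy : y ≠ 0 := hh y (by simp)
  have hf : signChanges ((g ++ [y]).map f).reverse = signChanges (g ++ [y]) := by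
    rw [signChanges_reverse]
    cases anti
    · simp [f]
    · simpa [f] using signChanges_map_neg (g ++ [y])
  have hjump : (if y * f y < 0 then 1 else 0) = anti.toNat := by
    cases anti <;> simp [f, mul_self_pos.2 hy, not_lt.2 (mul_self_nonneg y)]
  have hsplit : mirror anti (g ++ [y]) = g ++ y :: ((g ++ [y]).map f).reverse := by
    simp [mirror, f]
  have hhead : ((g ++ [y]).map f).reverse = f y :: (g.map f).reverse := by simp
  rw [hsplit, signChanges_append_cons, hhead, signChanges_cons_cons, ← hhead, hf, hjump]
  omega

lemma eq_append_reverse_map_take {l : List ℤ} (f : ℤ → ℤ) (hl : Even l.length)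
    (hf : l.reverse = l.map f) :
    l = l.take (l.length / 2) ++ ((l.take (l.length / 2)).map f).reverse := by
  have hdrop : l.drop (l.length / 2) = ((l.take (l.length / 2)).map f).reverse := by
    rw [List.map_take, ← hf, List.take_reverse, List.reverse_reverse]
    congr 1
    obtain ⟨k, hk⟩ := hl
    omega
  rw [← hdrop, List.take_append_drop]

lemma isECF_and_isPalOrAnti_iff {l : List ℤ} :
    IsECF l ∧ IsPalOrAnti l ↔
      ∃ anti h, h ≠ [] ∧ (∀ x ∈ h, x ≠ 0) ∧ l = mirror anti h := by
  constructor
  · rintro ⟨⟨hne, hev, hnz⟩, hpal⟩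
    have hhalf : l.take (l.length / 2) ≠ [] := by
      intro h0
      have := congrArg List.length h0
      have := List.length_pos_iff.2 hne
      obtain ⟨k, hk⟩ := hev
      simp only [List.length_take, List.length_nil] at *
      omega
    have hhalf_ne_zero : ∀ x ∈ l.take (l.length / 2), x ≠ 0 :=
      fun x hx => hnz x (List.mem_of_mem_take hx)
    rcases hpal with hp | ha
    · refine ⟨false, _, hhalf, hhalf_ne_zero, ?_⟩
      simpa [mirror] using eq_append_reverse_map_take id hev (by simp [hp])
    · refine ⟨true, _, hhalf, hhalf_ne_zero, ?_⟩
      simpa [mirror] using eq_append_reverse_map_take _ hev ha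
  · rintro ⟨anti, h, hne, hnz, rfl⟩
    refine ⟨⟨by simp [mirror, hne], by simp [length_mirror], ?_⟩, ?_⟩
    · intro x hx
      rcases List.mem_append.1 hx with hx | hx
      · exact hnz x hx
      · obtain ⟨z, hz, rfl⟩ := List.mem_map.1 (List.mem_reverse.1 hx)
        have := hnz z hz
        split_ifs <;> simpa
    · cases anti
      · left; simp [mirror]
      · right; simp [mirror]

lemma mirror_mem_Eset_iff {c b : ℕ} (anti : Bool) {h : List ℤ} (hne : h ≠ [])
    (hh : ∀ x ∈ h, x ≠ 0) :
    mirror anti h ∈ Eset c b ↔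
      c + anti.toNat + 2 * signChanges h = 4 * absSum h ∧
        b + anti.toNat + 2 * signChanges h = 2 * absSum h + 1 := by
  have hECF := (isECF_and_isPalOrAnti_iff.2 ⟨anti, h, hne, hh, rfl⟩).1
  have := Bool.toNat_le anti
  simp only [Eset, Set.mem_ofPred_eq, absSum_mirror, signChanges_mirror anti hne hh, hECF,
    true_and]
  omega

lemma Eset_inter_isPalOrAnti (c b : ℕ) :
    Eset c b ∩ {l | IsPalOrAnti l} =
      if Odd (c + b) ∧ 2 ≤ b ∧ 2 * b ≤ c + 2 then
        mirror c.bodd '' signedCompositions ((c + 1 - b) / 2) ((c + 2 - 2 * b) / 2)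
      else ∅ := by
  have hbodd := Nat.mod_two_of_bodd c
  ext l
  constructor
  · rintro ⟨hl, hpal⟩
    obtain ⟨anti, h, hne, hh, rfl⟩ := isECF_and_isPalOrAnti_iff.1 ⟨hl.1, hpal⟩
    obtain ⟨hc, hb⟩ := (mirror_mem_Eset_iff anti hne hh).1 hl
    have hlt := signChanges_lt_absSum hne hh
    have hanti : anti = c.bodd := by
      cases anti <;> cases hcb : c.bodd <;>
        simp only [hcb, Bool.toNat_false, Bool.toNat_true] at * <;> omega
    subst hanti
    rw [if_pos (by simp only [Nat.odd_iff]; omega)]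
    exact ⟨h, ⟨hne, hh, by omega, by omega⟩, rfl⟩
  · split_ifs with hcb
    · rintro ⟨h, ⟨hne, hh, hS, hL⟩, rfl⟩
      rw [Nat.odd_iff] at hcb
      refine ⟨(mirror_mem_Eset_iff _ hne hh).2 (by omega), ?_⟩
      exact (isECF_and_isPalOrAnti_iff.2 ⟨_, h, hne, hh, rfl⟩).2
    · exact False.elim

lemma two_mul_choose_mul_two_pow {n L k : ℕ} (h : n = L + k) :
    2 * (n.choose L * 2 ^ (n - L)) = 2 ^ (k + 1) * n.choose k := by
  rw [Nat.choose_symm_of_eq_add h, show n - L = k by omega, pow_succ]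
  ring

theorem ep_closed_formula (c b : ℕ) :
    ep c b =
      if 2 ≤ b ∧ b ≤ (c + 2) / 2 ∧ Even c ∧ Odd b then
        2 ^ ((b - 1) / 2) * Nat.choose ((c - b - 1) / 2) ((b - 3) / 2)
      else if 2 ≤ b ∧ b ≤ (c + 2) / 2 ∧ Odd c ∧ Even b then
        2 ^ (b / 2) * Nat.choose ((c - b - 1) / 2) ((b - 2) / 2)
      else 0 := by
  rw [ep, Eset_inter_isPalOrAnti]
  simp only [Nat.odd_iff, Nat.even_iff]
  split_ifs <;> try omega
  · rw [Set.ncard_image_of_injective _ (mirror_injective _),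
      show (c + 1 - b) / 2 = (c - b - 1) / 2 + 1 by omega, ncard_signedCompositions,
      two_mul_choose_mul_two_pow (k := (b - 3) / 2) (by omega),
      show (b - 1) / 2 = (b - 3) / 2 + 1 by omega]
  · rw [Set.ncard_image_of_injective _ (mirror_injective _),
      show (c + 1 - b) / 2 = (c - b - 1) / 2 + 1 by omega, ncard_signedCompositions,
      two_mul_choose_mul_two_pow (k := (b - 2) / 2) (by omega),
      show b / 2 = (b - 2) / 2 + 1 by omega]
  · exact Set.ncard_empty _
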